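/- Let Σ be a finite alphabet, let p ≥ 2 be a positive integer, let w be a finite partial word over Σ, let G(V,A) = R_p(Σ) be the Rauzy graph of length 2p−3 of the square-free words over Σ, and let X ⊆ Ψ(V). Let Ψ^{−1}(X) = {x ∈ V : Ψ(x) ∈ X}. Then for every v ∈ Ψ^{−1}(X), p_{|w|,w,G[Ψ^{−1}(X)]}(v) = p_{|w|,w,Ψ(G)[X]}(Ψ(v)). -/

import Mathlib

/-!
In `R_p` the `a`-successor of `v` is `v.tail ++ [a]`, and in `Ψ(R_p)` the `a`-successor of
`Ψ(v)` is `Ψ(v.tail ++ [a])`. The latter depends only on `Ψ(v)` and `a`: `Ψ` of a word is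
also `Ψ` of each of its suffixes satisfying `PsiProp`, and `PsiProp` survives appending a
letter. Moreover `v·a` is square-free iff `Ψ(v)·a` is: a square suffix of `v·a` longer than
`Ψ(v)·a` has half-length `i` with `⌈|Ψ(v)|/2⌉ < i ≤ p - 1`, so it would make `Ψ(v)` agree
with its shift by `i` at the positions where `PsiProp` demands a difference. So `Ψ` matches
the arcs out of `v` with the arcs out of `Ψ(v)` label by label, and the walk counts agree by
induction on the length.
-/

/-- A finite word is square-free: no factor is of the form `v ++ v` with `v` nonempty. -/
def SqFree {α : Type*} (u : List α) : Prop :=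
  ∀ v : List α, v ≠ [] → ¬ ((v ++ v) <:+: u)

/-- The arcs of the induced subgraph `G[X]`. -/
def inducedArcs {α : Type*} (A : Set (List α × List α × α)) (X : Set (List α)) :
    Set (List α × List α × α) :=
  {t | t ∈ A ∧ t.1 ∈ X ∧ t.2.1 ∈ X}

/-- The vertices of `R_p(α)`, the Rauzy graph of length `2p-3` of square-free words. -/
def rauzyVertices (α : Type*) (p : ℕ) : Set (List α) :=
  {u | SqFree u ∧ u.length = 2 * p - 3}

/-- The arcs of `R_p(α)`: `(au, ub, b)` for square-free words `aub` of length `2p-2`. -/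
def rauzyArcs (α : Type*) (p : ℕ) : Set (List α × List α × α) :=
  {t | ∃ (a b : α) (u : List α), SqFree (a :: (u ++ [b])) ∧ u.length = 2 * p - 4 ∧
    t = (a :: u, u ++ [b], b)}

/-- The walk counts `p_{i,w,G}(v)`: number of walks of length `i` starting from `v`
compatible with the last `i` letters of the partial word `w`. -/
noncomputable def walkCount {α : Type*} (A : Set (List α × List α × α))
    (w : List (Option α)) : ℕ → List α → ℕ
  | 0, _ => 1
  | i + 1, v =>
    ∑ᶠ (u : List α), ∑ᶠ (a : α),
      ∑ᶠ (_ : (v, u, a) ∈ A ∧ ∀ b : α, w[w.length - (i + 1)]? = some (some b) → a = b),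
        walkCount A w i u

/-- The defining property of `Ψ`: for every `i` with `⌈|s|/2⌉ + 1 ≤ i ≤ p - 1` there is
`k ∈ {0, …, |s| - i - 1}` with `s_{|s|-k} ≠ s_{|s|-k-i}` (positions 1-indexed). -/
def PsiProp {α : Type*} (p : ℕ) (s : List α) : Prop :=
  ∀ i : ℕ, (s.length + 1) / 2 + 1 ≤ i → i ≤ p - 1 →
    ∃ k : ℕ, k + i + 1 ≤ s.length ∧ s[s.length - k - 1]? ≠ s[s.length - k - i - 1]?

/-- `Ψ(w)`: the shortest suffix of `w` satisfying `PsiProp p`, i.e. the suffix obtained by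
dropping the largest possible number of initial letters. -/
noncomputable def psi {α : Type*} (p : ℕ) (w : List α) : List α :=
  w.drop (sSup {d : ℕ | PsiProp p (w.drop d)})

/-- The arc set of `Ψ(G)`: `{(Ψ(a), Ψ(b), c) : (a, b, c) ∈ A}`. -/
def psiArcs {α : Type*} (p : ℕ) (A : Set (List α × List α × α)) :
    Set (List α × List α × α) :=
  {t | ∃ s ∈ A, t = (psi p s.1, psi p s.2.1, s.2.2)}

section Psi

variable {α : Type*} {p : ℕ}

lemma psiProp_of_length_ge {s : List α} (h : 2 * p - 3 ≤ s.length) : PsiProp p s :=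
  fun _ h₁ h₂ => absurd h₂ (by omega)

lemma not_psiProp_nil (hp : 2 ≤ p) : ¬ PsiProp p ([] : List α) := fun h => by
  obtain ⟨k, hk, -⟩ := h 1 (by simp) (by omega)
  simp at hk

lemma psiProp_iff_reverse {s : List α} :
    PsiProp p s ↔ ∀ i : ℕ, (s.length + 1) / 2 + 1 ≤ i → i ≤ p - 1 →
      ∃ k : ℕ, k + i + 1 ≤ s.length ∧ s.reverse[k]? ≠ s.reverse[k + i]? := by
  refine forall₃_congr fun i _ _ => exists_congr fun k => and_congr_right fun hk => ?_
  rw [List.getElem?_reverse (by omega), List.getElem?_reverse (by omega),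
    show s.length - 1 - k = s.length - k - 1 by omega,
    show s.length - 1 - (k + i) = s.length - k - i - 1 by omega]

lemma PsiProp.append_singleton {s : List α} (h : PsiProp p s) (b : α) :
    PsiProp p (s ++ [b]) := by
  rw [psiProp_iff_reverse] at h ⊢
  intro i h₁ h₂
  simp only [List.length_append, List.length_singleton] at h₁
  obtain ⟨k, hk, hne⟩ := h i (by omega) h₂
  refine ⟨k + 1, by simp; omega, ?_⟩
  simpa [List.reverse_concat, Nat.add_right_comm k 1 i] using hne

lemma psi_suffix (v : List α) : psi p v <:+ v := List.drop_suffix _ _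

lemma bddAbove_psiProp_drop (hp : 2 ≤ p) (v : List α) :
    BddAbove {d : ℕ | PsiProp p (v.drop d)} := by
  refine ⟨v.length, fun d hd => ?_⟩
  by_contra! hlt
  rw [Set.mem_ofPred_eq, List.drop_eq_nil_of_le hlt.le] at hd
  exact not_psiProp_nil hp hd

lemma psiProp_psi (hp : 2 ≤ p) {s v : List α} (hs : s <:+ v) (h : PsiProp p s) :
    PsiProp p (psi p v) :=
  Nat.sSup_mem
    ⟨v.length - s.length, by rwa [Set.mem_ofPred_eq, ← List.suffix_iff_eq_drop.1 hs]⟩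
    (bddAbove_psiProp_drop hp v)

lemma length_psi_le (hp : 2 ≤ p) {s v : List α} (hs : s <:+ v) (h : PsiProp p s) :
    (psi p v).length ≤ s.length := by
  have hd : v.length - s.length ≤ sSup {d : ℕ | PsiProp p (v.drop d)} :=
    le_csSup (bddAbove_psiProp_drop hp v)
      (by rwa [Set.mem_ofPred_eq, ← List.suffix_iff_eq_drop.1 hs])
  rw [psi, List.length_drop]
  omega

lemma psi_eq_psi_of_suffix (hp : 2 ≤ p) {s v : List α} (hs : s <:+ v) (h : PsiProp p s) :
    psi p v = psi p s := by
  have hsv : psi p s <:+ v := (psi_suffix s).trans hs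
  have hle : (psi p v).length ≤ (psi p s).length :=
    length_psi_le hp hsv (psiProp_psi hp (List.suffix_refl s) h)
  have hvs : psi p v <:+ s :=
    List.suffix_of_suffix_length_le (psi_suffix v) hs (hle.trans (psi_suffix s).length_le)
  have hge : (psi p s).length ≤ (psi p v).length := length_psi_le hp hvs (psiProp_psi hp hs h)
  exact (List.suffix_of_suffix_length_le (psi_suffix v) hsv hle).eq_of_length (by omega)

lemma psi_tail_append_singleton (hp : 2 ≤ p) {z : List α} (hz : PsiProp p z)
    (hlt : (psi p z).length < z.length) (b : α) :
    psi p (z.tail ++ [b]) = psi p (psi p z ++ [b]) := by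
  have hsuf : psi p z ++ [b] <:+ z.tail ++ [b] := by
    obtain ⟨t, ht⟩ := psi_suffix (p := p) z
    obtain _ | ⟨c, t⟩ := t
    · rw [List.nil_append] at ht
      exact absurd (ht ▸ hlt) (lt_irrefl _)
    · have htail := congrArg List.tail ht
      rw [List.cons_append, List.tail_cons] at htail
      exact ⟨t, by rw [← htail, List.append_assoc]⟩
  exact psi_eq_psi_of_suffix hp hsuf
    ((psiProp_psi hp (List.suffix_refl z) hz).append_singleton b)

lemma psi_tail_append_singleton_congr (hp : 2 ≤ p) {x y : List α} (hx : PsiProp p x)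
    (hy : PsiProp p y) (hlen : x.length = y.length) (hψ : psi p x = psi p y) (b : α) :
    psi p (x.tail ++ [b]) = psi p (y.tail ++ [b]) := by
  rcases (psi_suffix (p := p) x).length_le.lt_or_eq with hlt | heq
  · rw [psi_tail_append_singleton hp hx hlt,
      psi_tail_append_singleton hp hy (by rwa [← hψ, ← hlen]), hψ]
  · rw [← (psi_suffix x).eq_of_length heq, hψ,
      (psi_suffix y).eq_of_length (by rw [← hψ, heq, hlen])]

end Psi

section SquareFree

variable {α : Type*} {p : ℕ}

lemma SqFree.of_infix {u v : List α} (hu : SqFree u) (h : v <:+: u) : SqFree v :=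
  fun t ht hinf => hu t ht (hinf.trans h)

lemma getElem?_eq_of_prefix {l r : List α} (h : l <+: r) {j : ℕ} (hj : j < l.length) :
    r[j]? = l[j]? := by
  obtain ⟨t, rfl⟩ := h
  exact List.getElem?_append_left hj

lemma getElem?_add_length_of_append_self_prefix {u r : List α} (h : u ++ u <+: r) {j : ℕ}
    (hj : j < u.length) : r[j + u.length]? = r[j]? := by
  rw [getElem?_eq_of_prefix h (by simp; omega), getElem?_eq_of_prefix h (by simp; omega),
    List.getElem?_append_right (by omega), List.getElem?_append_left hj, Nat.add_sub_cancel]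

lemma sqFree_append_singleton_iff_psi (hp : 2 ≤ p) {x : List α} (hx : SqFree x)
    (hlen : x.length = 2 * p - 3) (b : α) :
    SqFree (x ++ [b]) ↔ SqFree (psi p x ++ [b]) := by
  have hsuf : psi p x ++ [b] <:+ x ++ [b] := List.suffix_append_self_iff.2 (psi_suffix x)
  refine ⟨fun h => h.of_infix hsuf.isInfix, fun hψ v hv hinf => ?_⟩
  rcases List.infix_concat_iff.1 hinf with hvv | hvv
  swap
  · exact hx v hv hvv
  have hvlen : 2 * v.length ≤ x.length + 1 := by simpa [← two_mul] using hvv.length_le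
  by_cases hshort : 2 * v.length ≤ (psi p x).length + 1
  · exact hψ v hv (List.suffix_of_suffix_length_le hvv hsuf (by simp; omega)).isInfix
  -- a longer square suffix would make `Ψ(x)·b` periodic with period `|v| ≤ p - 1`
  have hprop := psiProp_iff_reverse.1
    (psiProp_psi hp (List.suffix_refl x) (psiProp_of_length_ge hlen.ge))
  obtain ⟨k, hk, hne⟩ := hprop v.length (by omega) (by omega)
  have hrev : b :: (psi p x).reverse <+: b :: x.reverse := by
    simpa only [List.reverse_concat] using List.reverse_prefix.2 hsuf
  have hsq : v.reverse ++ v.reverse <+: b :: x.reverse := by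
    simpa only [List.reverse_append, List.reverse_singleton, List.singleton_append] using
      List.reverse_prefix.2 hvv
  apply hne
  calc (psi p x).reverse[k]? = (b :: x.reverse)[k + 1]? := by
        rw [getElem?_eq_of_prefix hrev (by simp; omega), List.getElem?_cons_succ]
    _ = (b :: x.reverse)[k + 1 + v.reverse.length]? :=
        (getElem?_add_length_of_append_self_prefix hsq (by simp; omega)).symm
    _ = (psi p x).reverse[k + v.length]? := by
        rw [getElem?_eq_of_prefix hrev (by simp; omega), List.length_reverse,
          Nat.add_right_comm, List.getElem?_cons_succ]

end SquareFree

section WalkCount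

variable {α : Type*} [Fintype α]

open scoped Classical in
lemma walkCount_succ_eq_sum {A : Set (List α × List α × α)} {w : List (Option α)} {i : ℕ}
    {v : List α} {next : α → List α} (hnext : ∀ u a, (v, u, a) ∈ A → u = next a) :
    walkCount A w (i + 1) v = ∑ a : α,
      if (v, next a, a) ∈ A ∧ ∀ b : α, w[w.length - (i + 1)]? = some (some b) → a = b
      then walkCount A w i (next a) else 0 := by
  set C : α → Prop := fun a =>
    (v, next a, a) ∈ A ∧ ∀ b : α, w[w.length - (i + 1)]? = some (some b) → a = b
  have hinner : ∀ u, (∑ᶠ (a : α), ∑ᶠ (_ : (v, u, a) ∈ A ∧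
      ∀ b : α, w[w.length - (i + 1)]? = some (some b) → a = b), walkCount A w i u) =
      ∑ a : α, if u = next a then (if C a then walkCount A w i (next a) else 0) else 0 := by
    intro u
    rw [finsum_eq_sum_of_fintype]
    refine Finset.sum_congr rfl fun a _ => ?_
    rw [finsum_eq_if]
    by_cases hu : u = next a
    · subst hu
      exact (if_pos rfl).symm
    · simp only [hu, if_false]
      exact if_neg fun h => hu (hnext u a h.1)
  rw [walkCount, finsum_congr hinner, finsum_sum_comm]
  · exact Finset.sum_congr rfl fun a _ =>
      (finsum_eq_single _ (next a) fun u hu => if_neg hu).trans (if_pos rfl)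
  · intro a _
    refine (Set.finite_singleton (next a)).subset fun u hu => ?_
    by_contra hne
    exact hu (if_neg hne)

theorem walkCount_eq_walkCount_of_simulation {A B : Set (List α × List α × α)}
    {S : Set (List α)} (f : List α → List α) (next : List α → α → List α)
    (hA : ∀ v ∈ S, ∀ u a, (v, u, a) ∈ A → u = next v a ∧ u ∈ S)
    (hB : ∀ v ∈ S, ∀ u a, (f v, u, a) ∈ B → u = f (next v a))
    (hAB : ∀ v ∈ S, ∀ a, (v, next v a, a) ∈ A ↔ (f v, f (next v a), a) ∈ B)
    (w : List (Option α)) (i : ℕ) :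
    ∀ v ∈ S, walkCount A w i v = walkCount B w i (f v) := by
  induction i with
  | zero => exact fun _ _ => rfl
  | succ i ih =>
    intro v hv
    rw [walkCount_succ_eq_sum fun u a h => (hA v hv u a h).1,
      walkCount_succ_eq_sum (hB v hv)]
    refine Finset.sum_congr rfl fun a _ => ?_
    rw [← hAB v hv a]
    split_ifs with h
    · exact ih _ (hA v hv _ a h.1).2
    · rfl

end WalkCount

section Rauzy

variable {α : Type*} {p : ℕ}

lemma mem_rauzyArcs_iff (hp : 2 ≤ p) {v u : List α} {a : α} (hv : v.length = 2 * p - 3) :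
    (v, u, a) ∈ rauzyArcs α p ↔ SqFree (v ++ [a]) ∧ u = v.tail ++ [a] := by
  obtain ⟨c, t, rfl⟩ :=
    List.exists_cons_of_ne_nil (List.ne_nil_of_length_pos (by omega) : v ≠ [])
  simp only [List.length_cons] at hv
  simp only [rauzyArcs, Set.mem_ofPred_eq, Prod.mk.injEq, List.cons.injEq]
  constructor
  · rintro ⟨_, _, _, hsq, -, ⟨rfl, rfl⟩, rfl, rfl⟩
    exact ⟨hsq, rfl⟩
  · rintro ⟨hsq, rfl⟩
    exact ⟨c, a, t, hsq, by omega, ⟨rfl, rfl⟩, rfl, rfl⟩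

lemma mem_rauzyVertices_of_mem_rauzyArcs (hp : 2 ≤ p) {x u : List α} {a : α}
    (h : (x, u, a) ∈ rauzyArcs α p) : x ∈ rauzyVertices α p := by
  obtain ⟨c, b, t, hsq, ht, heq⟩ := h
  simp only [Prod.mk.injEq] at heq
  obtain ⟨rfl, -, -⟩ := heq
  exact ⟨hsq.of_infix (List.prefix_append (c :: t) [b]).isInfix, by simp; omega⟩

lemma tail_append_singleton_mem_rauzyVertices (hp : 2 ≤ p) {v : List α}
    (hv : v ∈ rauzyVertices α p) {a : α} (h : SqFree (v ++ [a])) :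
    v.tail ++ [a] ∈ rauzyVertices α p := by
  have hne : v ≠ [] := List.ne_nil_of_length_pos (by rw [hv.2]; omega)
  refine ⟨h.of_infix ?_, by simp [hv.2]; omega⟩
  rw [← List.tail_append_of_ne_nil hne]
  exact (List.tail_suffix _).isInfix

lemma mem_psiArcs_rauzyArcs_iff (hp : 2 ≤ p) {v z : List α} (hv : v ∈ rauzyVertices α p)
    {a : α} :
    (psi p v, z, a) ∈ psiArcs p (rauzyArcs α p) ↔
      SqFree (v ++ [a]) ∧ z = psi p (v.tail ++ [a]) := by
  constructor
  · rintro ⟨⟨x, u, c⟩, hxu, heq⟩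
    simp only [Prod.mk.injEq] at heq
    obtain ⟨hψ, rfl, rfl⟩ := heq
    have hx := mem_rauzyVertices_of_mem_rauzyArcs hp hxu
    obtain ⟨hsq, rfl⟩ := (mem_rauzyArcs_iff hp hx.2).1 hxu
    refine ⟨(sqFree_append_singleton_iff_psi hp hv.1 hv.2 a).2 ?_, ?_⟩
    · rw [hψ]
      exact (sqFree_append_singleton_iff_psi hp hx.1 hx.2 a).1 hsq
    · exact psi_tail_append_singleton_congr hp (psiProp_of_length_ge hx.2.ge)
        (psiProp_of_length_ge hv.2.ge) (by rw [hx.2, hv.2]) hψ.symm a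
  · rintro ⟨hsq, rfl⟩
    exact ⟨(v, v.tail ++ [a], a), (mem_rauzyArcs_iff hp hv.2).2 ⟨hsq, rfl⟩, rfl⟩

end Rauzy

theorem walkCount_psi_eq_general
    {α : Type*} [Fintype α] (p : ℕ) (hp : 2 ≤ p)
    (w : List (Option α)) (X : Set (List α)) :
    ∀ v ∈ rauzyVertices α p, psi p v ∈ X →
      walkCount (inducedArcs (rauzyArcs α p) {y | y ∈ rauzyVertices α p ∧ psi p y ∈ X})
          w w.length v
        = walkCount (inducedArcs (psiArcs p (rauzyArcs α p)) X) w w.length (psi p v) := by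
  set S := {y | y ∈ rauzyVertices α p ∧ psi p y ∈ X}
  have hA : ∀ v ∈ S, ∀ u a, (v, u, a) ∈ inducedArcs (rauzyArcs α p) S →
      u = v.tail ++ [a] ∧ u ∈ S :=
    fun v hv u a h => ⟨((mem_rauzyArcs_iff hp hv.1.2).1 h.1).2, h.2.2⟩
  have hB : ∀ v ∈ S, ∀ u a, (psi p v, u, a) ∈ inducedArcs (psiArcs p (rauzyArcs α p)) X →
      u = psi p (v.tail ++ [a]) :=
    fun v hv u a h => ((mem_psiArcs_rauzyArcs_iff hp hv.1).1 h.1).2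
  have hAB : ∀ v ∈ S, ∀ a, (v, v.tail ++ [a], a) ∈ inducedArcs (rauzyArcs α p) S ↔
      (psi p v, psi p (v.tail ++ [a]), a) ∈ inducedArcs (psiArcs p (rauzyArcs α p)) X := by
    intro v hv a
    constructor
    · rintro ⟨harc, -, -, hX⟩
      exact ⟨(mem_psiArcs_rauzyArcs_iff hp hv.1).2
        ⟨((mem_rauzyArcs_iff hp hv.1.2).1 harc).1, rfl⟩, hv.2, hX⟩
    · rintro ⟨harc, -, hX⟩
      obtain ⟨hsq, -⟩ := (mem_psiArcs_rauzyArcs_iff hp hv.1).1 harc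
      exact ⟨(mem_rauzyArcs_iff hp hv.1.2).2 ⟨hsq, rfl⟩, hv,
        tail_append_singleton_mem_rauzyVertices hp hv.1 hsq, hX⟩
  exact fun v hv hvX => walkCount_eq_walkCount_of_simulation (psi p) (fun v a => v.tail ++ [a])
    hA hB hAB w w.length v ⟨hv, hvX⟩

theorem walkCount_psi_eq
    {α : Type*} [Fintype α] (p : ℕ) (hp : 2 ≤ p)
    (w : List (Option α)) (X : Set (List α))
    (hX : X ⊆ psi p '' rauzyVertices α p) :
    ∀ v ∈ rauzyVertices α p, psi p v ∈ X →
      walkCount (inducedArcs (rauzyArcs α p) {y | y ∈ rauzyVertices α p ∧ psi p y ∈ X})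
          w w.length v
        = walkCount (inducedArcs (psiArcs p (rauzyArcs α p)) X) w w.length (psi p v) :=
  walkCount_psi_eq_general p hp w X
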